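/- Characterization of environment strategies enforcing a safety specification (strategies enforcing safety never leave the winning region): let M be a DFA over A × B with finite state type and accepting set F, and let T be the set of nonempty finite words accepted by M. For a state q of M, define EnvWinsFrom(q) to hold iff there exists an environment strategy σenv such that for every agent strategy σag and every k ≥ 1, M.evalFrom q (play(σag, σenv)_{<k}) ∈ F. Then an environment strategy σenv enforces Safe T if and only if for every agent strategy σag and every k ≥ 0: EnvWinsFrom(M.eval(play(σag, σenv)_{<k})), and moreover M.eval(play(σag, σenv)_{<k}) ∈ F whenever k ≥ 1. -/

import Mathlib

/-- The first `k` letters of an infinite trace. -/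
def pre {α : Type} (π : ℕ → α) (k : ℕ) : List α := (List.range k).map π

/-- The finite history of pairs of moves after `k` rounds. -/
def playPrefix {A B : Type} (σag : List B → A) (σenv : List A → B) : ℕ → List (A × B)
  | 0 => []
  | k + 1 =>
      let h := playPrefix σag σenv k
      let a := σag (h.map Prod.snd)
      let b := σenv (h.map Prod.fst ++ [a])
      h ++ [(a, b)]

/-- The infinite play generated by an agent strategy `σag : List B → A`
(the agent moves first) and an environment strategy `σenv : List A → B`:
`a₀ = σag []`, `b₀ = σenv [a₀]`, `a_{i+1} = σag [b₀, …, b_i]`,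
`b_{i+1} = σenv [a₀, …, a_{i+1}]`, and `play σag σenv i = (a_i, b_i)`. -/
def play {A B : Type} (σag : List B → A) (σenv : List A → B) (i : ℕ) : A × B :=
  let h := playPrefix σag σenv i
  let a := σag (h.map Prod.snd)
  let b := σenv (h.map Prod.fst ++ [a])
  (a, b)

/-- Reachability property: some nonempty finite prefix is in `T`. -/
def Reach {A B : Type} (T : Set (List (A × B))) : Set (ℕ → A × B) :=
  {π | ∃ k, 1 ≤ k ∧ pre π k ∈ T}

/-- Safety property: every nonempty finite prefix is in `T`. -/
def Safe {A B : Type} (T : Set (List (A × B))) : Set (ℕ → A × B) :=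
  {π | ∀ k, 1 ≤ k → pre π k ∈ T}

/-- The agent strategy `σag` enforces the property `P`. -/
def AgentEnforces {A B : Type} (σag : List B → A) (P : Set (ℕ → A × B)) : Prop :=
  ∀ σenv : List A → B, play σag σenv ∈ P

/-- The environment strategy `σenv` enforces the property `P`. -/
def EnvEnforces {A B : Type} (σenv : List A → B) (P : Set (ℕ → A × B)) : Prop :=
  ∀ σag : List B → A, play σag σenv ∈ P

/-- The agent strategy `σag` enforces `Task` under the environment
specification `Env`. -/
def EnforcesUnder {A B : Type} (σag : List B → A) (Task Env : Set (ℕ → A × B)) : Prop :=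
  ∀ σenv : List A → B, EnvEnforces σenv Env → play σag σenv ∈ Task

/-- `EnvWinsSafeFrom M q` : the environment has a strategy ensuring that,
starting the run of `M` from state `q`, every state reached after `k ≥ 1`
letters of the play lies in `M.accept`. -/
def EnvWinsSafeFrom {A B Q : Type} (M : DFA (A × B) Q) (q : Q) : Prop :=
  ∃ σenv : List A → B, ∀ σag : List B → A, ∀ k, 1 ≤ k →
    M.evalFrom q (pre (play σag σenv) k) ∈ M.accept

/-
If `σenv` keeps every prefix of every play accepted, then after any history `h` of a play the
residual strategy `w ↦ σenv (h.map Prod.fst ++ w)` wins the safety game from `M.eval h`: an agent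
strategy played against it is simulated by the agent that follows the original history for
`h.length` rounds and then switches, and the resulting play extends `h`, so its prefixes are
accepted, i.e. the run from `M.eval h` stays in `M.accept`. The converse is immediate.
-/

section Plays

variable {A B : Type}

theorem pre_succ {α : Type} (π : ℕ → α) (k : ℕ) : pre π (k + 1) = pre π k ++ [π k] := by
  simp [pre, List.range_succ]

theorem playPrefix_eq_pre (σag : List B → A) (σenv : List A → B) (k : ℕ) :
    playPrefix σag σenv k = pre (play σag σenv) k := by
  induction k with
  | zero => rfl
  | succ k ih =>
    rw [pre_succ, ← ih]
    rfl

theorem playPrefix_succ (σag : List B → A) (σenv : List A → B) (k : ℕ) :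
    playPrefix σag σenv (k + 1) =
      let a := σag ((playPrefix σag σenv k).map Prod.snd)
      playPrefix σag σenv k ++ [(a, σenv ((playPrefix σag σenv k).map Prod.fst ++ [a]))] :=
  rfl

theorem length_playPrefix (σag : List B → A) (σenv : List A → B) (k : ℕ) :
    (playPrefix σag σenv k).length = k := by
  simp [playPrefix_eq_pre, pre]

theorem playPrefix_congr_of_eqOn_length_lt {σag σag' : List B → A} {k : ℕ}
    (h : ∀ bs : List B, bs.length < k → σag bs = σag' bs) (σenv : List A → B) :
    ∀ i ≤ k, playPrefix σag σenv i = playPrefix σag' σenv i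
  | 0, _ => rfl
  | i + 1, hi => by
    have ih := playPrefix_congr_of_eqOn_length_lt h σenv i (by omega)
    simp only [playPrefix_succ]
    rw [ih, h _ (by rw [List.length_map, length_playPrefix]; omega)]

def envAfter (σenv : List A → B) (h : List (A × B)) : List A → B :=
  fun as => σenv (h.map Prod.fst ++ as)

def switchAgent (σag : List B → A) (k : ℕ) (σag' : List B → A) : List B → A :=
  fun bs => if bs.length < k then σag bs else σag' (bs.drop k)

theorem playPrefix_switchAgent (σag σag' : List B → A) (σenv : List A → B) (k j : ℕ) :
    playPrefix (switchAgent σag k σag') σenv (k + j) =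
      playPrefix σag σenv k ++ playPrefix σag' (envAfter σenv (playPrefix σag σenv k)) j := by
  induction j with
  | zero =>
    rw [Nat.add_zero, playPrefix, List.append_nil]
    refine (playPrefix_congr_of_eqOn_length_lt (fun bs hbs => ?_) σenv k le_rfl).symm
    simp [switchAgent, hbs]
  | succ j ih =>
    set h := playPrefix σag σenv k
    set h' := playPrefix σag' (envAfter σenv h) j
    have hlen : (h.map Prod.snd).length = k := by simp [h, length_playPrefix]
    have hagent : switchAgent σag k σag' ((h ++ h').map Prod.snd) = σag' (h'.map Prod.snd) := by
      simp [switchAgent, hlen]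
    simp only [← Nat.add_assoc, playPrefix_succ]
    rw [ih, hagent]
    simp [h', envAfter]

theorem pre_play_switchAgent (σag σag' : List B → A) (σenv : List A → B) (k j : ℕ) :
    pre (play (switchAgent σag k σag') σenv) (k + j) =
      pre (play σag σenv) k ++ pre (play σag' (envAfter σenv (pre (play σag σenv) k))) j := by
  simp only [← playPrefix_eq_pre, playPrefix_switchAgent]

end Plays

section SafetyGame

variable {A B Q : Type} (M : DFA (A × B) Q)

theorem mem_safe_accepts_iff (π : ℕ → A × B) :
    π ∈ Safe {w | w ≠ [] ∧ w ∈ M.accepts} ↔ ∀ k, 1 ≤ k → M.eval (pre π k) ∈ M.accept := by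
  refine forall₂_congr fun k hk => ?_
  have hne : pre π k ≠ [] := by simpa [pre] using Nat.one_le_iff_ne_zero.mp hk
  simp [hne, DFA.mem_accepts]

theorem envWinsSafeFrom_eval_pre_play {σenv : List A → B}
    (hσenv : ∀ σag : List B → A, ∀ k, 1 ≤ k → M.eval (pre (play σag σenv) k) ∈ M.accept)
    (σag : List B → A) (k : ℕ) :
    EnvWinsSafeFrom M (M.eval (pre (play σag σenv) k)) := by
  refine ⟨envAfter σenv (pre (play σag σenv) k), fun σag' j hj => ?_⟩
  have hacc := hσenv (switchAgent σag k σag') (k + j) (by omega)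
  rwa [pre_play_switchAgent, DFA.eval, DFA.evalFrom_of_append] at hacc

end SafetyGame

theorem env_enforces_safe_characterization_general {A B Q : Type}
    (M : DFA (A × B) Q)
    (T : Set (List (A × B))) (hT : T = {w | w ≠ [] ∧ w ∈ M.accepts})
    (σenv : List A → B) :
    EnvEnforces σenv (Safe T) ↔
      ∀ σag : List B → A, ∀ k : ℕ,
        EnvWinsSafeFrom M (M.eval (pre (play σag σenv) k)) ∧
        (1 ≤ k → M.eval (pre (play σag σenv) k) ∈ M.accept) := by
  subst hT
  simp only [EnvEnforces, mem_safe_accepts_iff]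
  exact ⟨fun h σag k => ⟨envWinsSafeFrom_eval_pre_play M h σag k, h σag k⟩,
    fun h σag k => (h σag k).2⟩

/-- Characterization of environment strategies enforcing a safety
specification: `σenv` enforces `Safe T` (where `T` is the set of nonempty
finite words accepted by `M`) iff against every agent strategy the run of the
play in `M` stays inside the environment's winning region of the safety game,
and stays in `M.accept` from time `1` on. -/
theorem env_enforces_safe_characterization {A B Q : Type}
    [Fintype A] [Fintype B] [Nonempty A] [Nonempty B] [Fintype Q]
    (M : DFA (A × B) Q)
    (T : Set (List (A × B))) (hT : T = {w | w ≠ [] ∧ w ∈ M.accepts})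
    (σenv : List A → B) :
    EnvEnforces σenv (Safe T) ↔
      ∀ σag : List B → A, ∀ k : ℕ,
        EnvWinsSafeFrom M (M.eval (pre (play σag σenv) k)) ∧
        (1 ≤ k → M.eval (pre (play σag σenv) k) ∈ M.accept) :=
  env_enforces_safe_characterization_general M T hT σenv
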